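/- arXiv:2002.06678 — 2 statements merged into one kernel-verified Lean document; each statement's English description precedes it below -/
import Mathlib

section
/- A shifted and scaled log-gamma variable converges to standard normal: if G_α ~ Gamma(α, α) (shape α, rate α), then √α·log G_α converges in distribution to N(0,1) as α → ∞. -/
open MeasureTheory ProbabilityTheory Filter

namespace SqrtLogGammaAux

open Real Set
open scoped ENNReal NNReal

/-- The density (up to the normalizing constant) of `√α log G_α`. -/
noncomputable def qf (α y : ℝ) : ℝ := exp (sqrt α * y - α * exp (y / sqrt α) + α)

/-- The normalizing constant. -/
noncomputable def Df (α : ℝ) : ℝ := α ^ α * exp (-α) / (Gamma α * sqrt α)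

lemma qf_nonneg (α y : ℝ) : 0 ≤ qf α y := (exp_pos _).le

lemma continuous_qf (α : ℝ) : Continuous (qf α) := by
  unfold qf
  fun_prop

lemma exp_taylor {t : ℝ} (ht : |t| ≤ 1) : |exp t - 1 - t - t^2/2| ≤ |t|^3 * (2/9) := by
  have h := Real.exp_bound ht (n := 3) (by norm_num)
  norm_num [Finset.sum_range_succ, Nat.factorial] at h
  calc |exp t - 1 - t - t^2/2| = |exp t - (1 + t + t^2/2)| := by ring_nf
    _ ≤ |t|^3 * (2/9) := by convert h using 2

lemma phi_quarter {t : ℝ} (ht : |t| ≤ 1) : t^2/4 ≤ exp t - 1 - t := by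
  have h := abs_le.mp (exp_taylor ht)
  have h3 : |t|^3 ≤ t^2 := by
    calc |t|^3 = t^2 * |t| := by rw [pow_succ, sq_abs]
      _ ≤ t^2 * 1 := by nlinarith [sq_nonneg t]
      _ = t^2 := mul_one _
  nlinarith

lemma phi_pos_lin {t : ℝ} (ht : 1 ≤ t) : t/2 ≤ exp t - 1 - t := by
  have h1 : t ≤ exp (t - 1) := by linarith [Real.add_one_le_exp (t - 1)]
  have h2 : exp (t - 1) * exp 1 = exp t := by rw [← Real.exp_add]; ring_nf
  have h3 : (2.7182818283 : ℝ) < exp 1 := Real.exp_one_gt_d9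
  nlinarith [Real.exp_pos (t - 1)]

lemma phi_neg_lin {t : ℝ} (ht : t ≤ -1) : -t/4 ≤ exp t - 1 - t := by
  have h1 : t + 2 ≤ exp t * exp 1 := by
    have := Real.add_one_le_exp (t + 1)
    rw [Real.exp_add] at this; linarith
  have h3 : (2.7182818283 : ℝ) < exp 1 := Real.exp_one_gt_d9
  have h4 : exp 1 < 2.7182818286 := Real.exp_one_lt_d9
  nlinarith [Real.exp_pos t, Real.exp_pos 1]

lemma q_le {α : ℝ} (hα : 1 ≤ α) (y : ℝ) :
    qf α y ≤ exp (-(y^2)/4) + exp (-|y|/4) := by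
  have hα0 : (0:ℝ) < α := lt_of_lt_of_le one_pos hα
  set s := sqrt α with hs
  have hs1 : 1 ≤ s := by
    rw [hs, show (1:ℝ) = sqrt 1 by simp]; exact sqrt_le_sqrt hα
  have hsp : (0:ℝ) < s := lt_of_lt_of_le one_pos hs1
  have hss : s * s = α := mul_self_sqrt hα0.le
  set t := y / s with htdef
  have hyt : y = s * t := by rw [htdef]; field_simp
  have hexp : qf α y = exp (-(α * (exp t - 1 - t))) := by
    unfold qf; congr 1
    rw [← hs, ← hss, htdef]; field_simp; ring
  rcases le_or_gt (|t|) 1 with h | h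
  · have h1 := phi_quarter h
    have hy2 : y^2 = α * t^2 := by rw [hyt, ← hss]; ring
    have : qf α y ≤ exp (-(y^2)/4) := by
      rw [hexp, exp_le_exp]; nlinarith
    linarith [(exp_pos (-|y|/4)).le]
  · have habs : qf α y ≤ exp (-|y|/4) := by
      rcases le_or_gt 1 t with h1 | h1
      · have hphi := phi_pos_lin h1
        have hy : 1 ≤ y := by nlinarith
        have hay : |y| = y := abs_of_pos (by linarith)
        rw [hexp, exp_le_exp, hay]
        have e1 : α * (t/2) = s * y / 2 := by rw [hyt, ← hss]; ring
        nlinarith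
      · have ht1 : t ≤ -1 := by
          rcases abs_cases t with ⟨he, _⟩ | ⟨he, _⟩
          · rw [he] at h; linarith
          · rw [he] at h; linarith
        have hphi := phi_neg_lin ht1
        have hy : y ≤ -1 := by nlinarith
        have hay : |y| = -y := abs_of_neg (by linarith)
        rw [hexp, exp_le_exp, hay]
        have e1 : α * (-t/4) = -(s * y) / 4 := by rw [hyt, ← hss]; ring
        nlinarith
    linarith [(exp_pos (-(y^2)/4)).le]

lemma sqrt_tendsto : Tendsto (fun α : ℝ => sqrt α) atTop atTop := by
  apply (tendsto_rpow_atTop (y := (1:ℝ)/2) (by norm_num)).congr'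
  filter_upwards with α
  rw [Real.sqrt_eq_rpow]

lemma q_tendsto (y : ℝ) :
    Tendsto (fun α => qf α y) atTop (nhds (exp (-(y^2)/2))) := by
  have key : Tendsto (fun α : ℝ => sqrt α * y - α * exp (y / sqrt α) + α)
      atTop (nhds (-(y^2)/2)) := by
    rw [tendsto_iff_dist_tendsto_zero]
    apply squeeze_zero' (g := fun α : ℝ => |y|^3 * (2/9) / sqrt α)
      (.of_forall fun _ => dist_nonneg)
    · filter_upwards [eventually_ge_atTop (1:ℝ), eventually_ge_atTop (y^2)] with α h1 h2
      have hα0 : (0:ℝ) < α := lt_of_lt_of_le one_pos h1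
      set s := sqrt α with hs
      have hsp : (0:ℝ) < s := sqrt_pos.mpr hα0
      have hss : s * s = α := mul_self_sqrt hα0.le
      set t := y / s with htdef
      have hts : t * s = y := by rw [htdef]; field_simp
      have htle : |t| ≤ 1 := by
        rw [htdef, abs_div, abs_of_pos hsp, div_le_one hsp]
        calc |y| = sqrt (y^2) := (Real.sqrt_sq_eq_abs y).symm
          _ ≤ s := sqrt_le_sqrt h2
      have htay := exp_taylor htle
      have heq : sqrt α * y - α * exp (y / sqrt α) + α = -(α * (exp t - 1 - t)) := by
        rw [← hs, ← hss, htdef]; field_simp; ring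
      rw [Real.dist_eq, heq]
      have e2 : α * (t^2/2) = y^2/2 := by rw [← hss, ← hts]; ring
      have e3 : α * |t|^3 = |y|^3 / s := by
        rw [← hss]
        have : |t| = |y| / s := by rw [htdef, abs_div, abs_of_pos hsp]
        rw [this]; field_simp
      have e4 : (-(α * (exp t - 1 - t))) - (-(y^2)/2) = α * (t^2/2 - (exp t - 1 - t)) := by
        rw [← hts]; linear_combination (t^2/2) * hss
      calc |(-(α * (exp t - 1 - t))) - (-(y^2)/2)| = α * |exp t - 1 - t - t^2/2| := by
            rw [e4, abs_mul, abs_of_pos hα0, abs_sub_comm]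
        _ ≤ α * (|t|^3 * (2/9)) := by nlinarith
        _ = |y|^3 * (2/9) / s := by
            rw [show α * (|t|^3 * (2/9)) = (α * |t|^3) * (2/9) by ring, e3]; ring
    · have := sqrt_tendsto.inv_tendsto_atTop
      have h2 := this.const_mul (|y|^3 * (2/9))
      rw [mul_zero] at h2
      exact h2.congr fun α => by simp [div_eq_mul_inv]
  have := (Real.continuous_exp.tendsto _).comp key
  exact this

lemma integral_map_eq {α : ℝ} (hα : 1 < α) (g : ℝ → ℝ) (hg : Continuous g) :
    ∫ y, g y ∂(Measure.map (fun x => Real.sqrt α * Real.log x) (gammaMeasure α α))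
      = Df α * ∫ y, qf α y * g y := by
  have hα0 : (0:ℝ) < α := lt_trans one_pos hα
  have hsp : 0 < sqrt α := sqrt_pos.mpr hα0
  have hss : sqrt α * sqrt α = α := mul_self_sqrt hα0.le
  rw [integral_map (φ := fun x => Real.sqrt α * Real.log x) ((measurable_const.mul Real.measurable_log).aemeasurable)
    hg.aestronglyMeasurable]
  rw [gammaMeasure]
  rw [show (gammaPDF α α) = fun x => ((Real.toNNReal (gammaPDFReal α α x) : ℝ≥0) : ℝ≥0∞) from rfl]
  rw [integral_withDensity_eq_integral_smul ((measurable_gammaPDFReal α α).real_toNNReal) _]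
  have hsmul : ∀ x : ℝ, (Real.toNNReal (gammaPDFReal α α x)) • g (sqrt α * log x)
      = gammaPDFReal α α x * g (sqrt α * log x) := by
    intro x
    rw [NNReal.smul_def, Real.coe_toNNReal _ (gammaPDFReal_nonneg hα0 hα0 x), smul_eq_mul]
  simp_rw [hsmul]
  rw [← setIntegral_eq_integral_of_forall_compl_eq_zero (s := Ioi (0:ℝ)) ?_]
  swap
  · intro x hx
    simp only [mem_Ioi, not_lt] at hx
    rcases lt_or_eq_of_le hx with h | h
    · rw [gammaPDFReal, if_neg (not_le.mpr h), zero_mul]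
    · subst h
      rw [gammaPDFReal, if_pos le_rfl,
        Real.zero_rpow (by intro hc; linarith [sub_eq_zero.mp hc]), mul_zero, zero_mul]
      exact zero_mul _
  have himg : Ioi (0:ℝ) = (fun y => exp (y / sqrt α)) '' univ := by
    rw [image_univ]
    rw [show (fun y : ℝ => exp (y / sqrt α)) = exp ∘ (fun y : ℝ => y / sqrt α) from rfl,
      range_comp]
    rw [show range (fun y : ℝ => y / sqrt α) = univ from
      (Function.Surjective.range_eq (fun z => ⟨z * sqrt α, by field_simp⟩))]
    rw [image_univ, Real.range_exp]
  rw [himg, integral_image_eq_integral_abs_deriv_smul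
    (f' := fun y => exp (y / sqrt α) * (1 / sqrt α)) MeasurableSet.univ ?_ ?_ _]
  · rw [setIntegral_univ, ← integral_const_mul]
    refine integral_congr_ae (.of_forall fun y => ?_)
    dsimp only
    have hle : log (exp (y / sqrt α)) = y / sqrt α := log_exp _
    have h2 : sqrt α * (y / sqrt α) = y := by field_simp
    rw [smul_eq_mul, hle, h2]
    rw [gammaPDFReal, if_pos (exp_pos _).le]
    rw [show Real.exp (y / sqrt α) ^ (α - 1) = Real.exp ((y / sqrt α) * (α - 1)) from
      (Real.exp_mul _ _).symm]
    rw [abs_of_pos (by positivity), Df, qf]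
    have hE : rexp (y/sqrt α) * rexp (y/sqrt α*(α-1)) * rexp (-(α * rexp (y/sqrt α)))
        = rexp (-α) * rexp (sqrt α*y - α*rexp (y/sqrt α) + α) := by
      rw [← Real.exp_add, ← Real.exp_add, ← Real.exp_add]
      congr 1
      field_simp
      ring_nf
      linear_combination -y * hss
    linear_combination (α ^ α * g y / (Gamma α * Real.sqrt α)) * hE
  · intro x _
    exact ((Real.hasDerivAt_exp _).comp x ((hasDerivAt_id x).div_const _)).hasDerivWithinAt
  · intro a _ b _ h
    have := Real.exp_injective h
    field_simp at this
    exact this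

lemma integrable_exp_neg_abs_quarter : Integrable (fun y : ℝ => exp (-|y| / 4)) := by
  have h1 : IntegrableOn (fun y : ℝ => exp (-(1/4) * y)) (Ioi 0) :=
    exp_neg_integrableOn_Ioi 0 (by norm_num)
  have h2 : IntegrableOn (fun y : ℝ => exp (-(1/4) * y)) (Ici 0) := by
    rwa [integrableOn_Ici_iff_integrableOn_Ioi]
  set h : ℝ → ℝ := (Ici (0:ℝ)).indicator (fun y => exp (-(1/4) * y)) with hh
  have hInt : Integrable h := h2.integrable_indicator measurableSet_Ici
  have hIntNeg : Integrable (fun y => h (-y)) := hInt.comp_neg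
  apply Integrable.mono' (hInt.add hIntNeg)
  · exact (Real.continuous_exp.comp ((continuous_abs.neg).div_const 4)).aestronglyMeasurable
  · refine .of_forall fun y => ?_
    rw [Real.norm_eq_abs, abs_of_pos (exp_pos _)]
    have hnn : ∀ z : ℝ, 0 ≤ h z := fun z =>
      indicator_nonneg (fun a _ => (exp_pos _).le) _
    rcases le_or_gt 0 y with hy | hy
    · have e : -|y| / 4 = -(1/4) * y := by rw [abs_of_nonneg hy]; ring
      have e2 : h y = exp (-(1/4) * y) := by rw [hh, indicator_of_mem (mem_Ici.mpr hy)]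
      rw [e, ← e2]
      simp only [Pi.add_apply]
      linarith [hnn (-y)]
    · have e : -|y| / 4 = -(1/4) * (-y) := by rw [abs_of_neg hy]; ring
      have e2 : h (-y) = exp (-(1/4) * (-y)) := by
        rw [hh, indicator_of_mem (mem_Ici.mpr (by linarith))]
      rw [e, ← e2]
      simp only [Pi.add_apply]
      linarith [hnn y]

lemma tendsto_int (g : ℝ → ℝ) (hg : Continuous g) (C : ℝ) (hC : ∀ y, |g y| ≤ C) :
    Tendsto (fun α => ∫ y, qf α y * g y) atTop (nhds (∫ y, exp (-(y^2)/2) * g y)) := by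
  have hbound : Integrable (fun y : ℝ => (exp (-(y^2)/4) + exp (-|y|/4)) * C) := by
    have hgauss4 : Integrable (fun y : ℝ => exp (-(y^2)/4)) := by
      have h : (fun y : ℝ => exp (-(y^2)/4)) = (fun y : ℝ => exp (-(1/4) * y^2)) :=
        funext fun y => by ring_nf
      rw [h]
      exact integrable_exp_neg_mul_sq (by norm_num)
    exact (hgauss4.add integrable_exp_neg_abs_quarter).mul_const C
  apply tendsto_integral_filter_of_dominated_convergence
    (fun y : ℝ => (exp (-(y^2)/4) + exp (-|y|/4)) * C) ?_ ?_ hbound ?_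
  · filter_upwards with α
    exact ((continuous_qf α).mul hg).aestronglyMeasurable
  · filter_upwards [eventually_ge_atTop (1:ℝ)] with α hα
    refine .of_forall fun y => ?_
    rw [Real.norm_eq_abs, abs_mul, abs_of_nonneg (qf_nonneg α y)]
    exact mul_le_mul (q_le hα y) (hC y) (abs_nonneg _) (by positivity)
  · exact .of_forall fun y => (q_tendsto y).mul_const (g y)

lemma D_eq {α : ℝ} (hα : 1 < α) : Df α = (∫ y, qf α y)⁻¹ := by
  have hα0 : (0:ℝ) < α := lt_trans one_pos hα
  have h := integral_map_eq hα (fun _ => 1) continuous_const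
  have : IsProbabilityMeasure (gammaMeasure α α) := isProbabilityMeasure_gammaMeasure hα0 hα0
  have hprob : IsProbabilityMeasure
      (Measure.map (fun x => Real.sqrt α * Real.log x) (gammaMeasure α α)) :=
    Measure.isProbabilityMeasure_map (measurable_const.mul Real.measurable_log).aemeasurable
  rw [integral_const] at h
  simp only [measure_univ, ENNReal.toReal_one, probReal_univ, smul_eq_mul, mul_one, one_mul] at h
  have hI : (∫ y, qf α y) ≠ 0 := by
    intro h0; rw [h0, mul_zero] at h; exact one_ne_zero h
  field_simp
  linarith [h]

lemma gauss_side (g : ℝ → ℝ) :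
    ∫ y, g y ∂(gaussianReal 0 1) = (sqrt (2*π))⁻¹ * ∫ y, exp (-(y^2)/2) * g y := by
  rw [gaussianReal_of_var_ne_zero _ one_ne_zero,
    show gaussianPDF 0 1 = fun x => ((Real.toNNReal (gaussianPDFReal 0 1 x) : ℝ≥0) : ℝ≥0∞)
      from rfl,
    integral_withDensity_eq_integral_smul ((measurable_gaussianPDFReal _ _).real_toNNReal) _,
    ← integral_const_mul]
  refine integral_congr_ae (.of_forall fun y => ?_)
  dsimp only
  rw [NNReal.smul_def, Real.coe_toNNReal _ (gaussianPDFReal_nonneg _ _ _), smul_eq_mul,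
    gaussianPDFReal]
  push_cast
  norm_num
  ring_nf

end SqrtLogGammaAux

open SqrtLogGammaAux Real in
/-- A scaled log-gamma variable converges to standard normal: if `G_α ~ Gamma(α, α)`
(shape `α`, rate `α`), then `√α · log G_α` converges in distribution to `N(0,1)` as
`α → ∞`, where convergence in distribution means convergence of expectations of all
bounded continuous test functions. -/
theorem sqrt_log_gamma_tendsto_gaussian
    (f : BoundedContinuousFunction ℝ ℝ) :
    Tendsto
      (fun α : ℝ =>
        ∫ y, f y ∂(Measure.map (fun x => Real.sqrt α * Real.log x) (gammaMeasure α α)))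
      atTop
      (nhds (∫ y, f y ∂(gaussianReal 0 1))) := by
  have hπ : (0:ℝ) < 2 * π := by positivity
  have hgauss : ∫ y : ℝ, exp (-(y^2)/2) = sqrt (2*π) := by
    have h := integral_gaussian (1/2)
    rw [show (fun x : ℝ => exp (-(x^2)/2)) = fun x : ℝ => exp (-(1/2) * x^2) from
      funext fun x => by congr 1; ring]
    rw [h]
    congr 1
    ring
  have hI : Tendsto (fun α => ∫ y, qf α y) atTop (nhds (sqrt (2*π))) := by
    have h := tendsto_int (fun _ => 1) continuous_const 1 (fun y => by norm_num)
    simp only [mul_one] at h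
    rwa [hgauss] at h
  have hD : Tendsto Df atTop (nhds ((sqrt (2*π))⁻¹)) := by
    have h := hI.inv₀ (ne_of_gt (sqrt_pos.mpr hπ))
    apply h.congr'
    filter_upwards [eventually_gt_atTop (1:ℝ)] with α hα
    exact (D_eq hα).symm
  have hnum := tendsto_int f f.continuous ‖f‖
    (fun y => by rw [← Real.norm_eq_abs]; exact f.norm_coe_le_norm y)
  have hmain := hD.mul hnum
  rw [gauss_side f]
  apply Tendsto.congr' ?_ hmain
  filter_upwards [eventually_gt_atTop (1:ℝ)] with α hα
  exact (integral_map_eq hα f f.continuous).symm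
end

section
/- MFM partition distribution: under the mixture-of-finite-mixtures model with K ~ p_K, (π₁,...,π_K)|K ~ Dirichlet(γ,...,γ), and z_i | K, π i.i.d. categorical with probabilities π, the induced distribution on the partition C of {1,...,n} is p(C) = V_n(t) ∏_{c∈C} γ^{(|c|)}, where t = |C|, V_n(t) = Σ_{k=1}^∞ k_{(t)}/(γk)^{(n)} · p_K(k), x^{(m)} = x(x+1)⋯(x+m−1), and x_{(m)} = x(x−1)⋯(x−m+1). -/
/-- Ascending factorial `x^{(m)} = x (x+1) ⋯ (x+m−1)` for a real `x`. -/
def ascFac (x : ℝ) (m : ℕ) : ℝ := ∏ i ∈ Finset.range m, (x + i)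

/-- Descending factorial `k_{(t)} = k (k−1) ⋯ (k−t+1)` for a natural `k`, as a real. -/
def descFac (k : ℕ) (t : ℕ) : ℝ := ∏ i ∈ Finset.range t, ((k : ℝ) - i)

/-- The set partition of `{1,...,n}` induced by a labeling `z : Fin n → Fin k`:
the collection of nonempty fibers of `z`. -/
def partOf {n k : ℕ} (z : Fin n → Fin k) : Finset (Finset (Fin n)) :=
  (Finset.univ.image (fun h : Fin k => Finset.univ.filter (fun i => z i = h))).erase ∅

/-!
Given `K = k`, the weight `∏_h γ^{(n_h)} / (γ k)^{(n)}` of a labeling depends only on the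
partition it induces, because unused labels contribute `γ^{(0)} = 1`. The labelings inducing a
partition `C` with `t` blocks are exactly the injective assignments of labels to the blocks, so
there are `k_{(t)}` of them, and summing over `k` against `p_K` produces `V_n(t)`.
-/

open Finset

lemma descFac_eq_descFactorial (k t : ℕ) : descFac k t = k.descFactorial t := by
  rw [descFac, ← descPochhammer_eval_eq_prod_range, descPochhammer_eval_eq_descFactorial]

lemma ascFac_zero (x : ℝ) : ascFac x 0 = 1 := prod_range_zero _

namespace Finpartition

variable {α β : Type*} [Fintype α] [DecidableEq α] (P : Finpartition (univ : Finset α))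

def labelOfParts (g : P.parts → β) (i : α) : β := g ⟨P.part i, P.part_mem.2 (mem_univ i)⟩

lemma parts_eq_image_part : P.parts = univ.image P.part := by
  ext c
  refine ⟨fun hc => ?_, fun hc => ?_⟩
  · obtain ⟨i, -, rfl⟩ := P.part_surjOn hc
    exact mem_image_of_mem _ (mem_univ i)
  · obtain ⟨i, -, rfl⟩ := mem_image.1 hc
    exact P.part_mem.2 (mem_univ i)

lemma labelOfParts_injective : Function.Injective (P.labelOfParts (β := β)) := by
  intro g g' hgg'
  ext ⟨c, hc⟩
  obtain ⟨i, hi⟩ := P.nonempty_of_mem_parts hc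
  have hic : (⟨P.part i, P.part_mem.2 (mem_univ i)⟩ : P.parts) = ⟨c, hc⟩ :=
    Subtype.ext (P.part_eq_of_mem hc hi)
  simpa only [labelOfParts, hic] using congrFun hgg' i

end Finpartition

section partOf

variable {n k : ℕ} (P : Finpartition (univ : Finset (Fin n)))

lemma partOf_eq_image_fiber (z : Fin n → Fin k) :
    partOf z = univ.image fun i => ({j | z j = z i} : Finset (Fin n)) := by
  ext c
  simp only [partOf, mem_erase, mem_image, mem_univ, true_and]
  constructor
  · rintro ⟨hc, h, rfl⟩
    obtain ⟨i, hi⟩ := nonempty_iff_ne_empty.2 hc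
    exact ⟨i, by rw [(mem_filter.1 hi).2]⟩
  · rintro ⟨i, rfl⟩
    exact ⟨ne_empty_of_mem (a := i) (by simp), z i, rfl⟩

lemma prod_fiber_card_eq_prod_partOf {M : Type*} [CommMonoid M] (f : ℕ → M) (hf : f 0 = 1)
    (z : Fin n → Fin k) : ∏ h, f #{i | z i = h} = ∏ c ∈ partOf z, f #c := by
  have card_fiber_preimage :
      ∀ c ∈ partOf z, #{h | ({i | z i = h} : Finset (Fin n)) = c} = 1 := by
    simp only [partOf, mem_erase, mem_image, mem_univ, true_and, card_eq_one]
    rintro c ⟨hc, h, rfl⟩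
    obtain ⟨i, hi⟩ := nonempty_iff_ne_empty.2 hc
    refine ⟨h, eq_singleton_iff_unique_mem.2 ⟨by simp, fun h' hh' => ?_⟩⟩
    have hi' : i ∈ ({i | z i = h'} : Finset (Fin n)) := (mem_filter.1 hh').2 ▸ hi
    exact (mem_filter.1 hi').2.symm.trans (mem_filter.1 hi).2
  calc ∏ h, f #{i | z i = h}
      = ∏ c ∈ univ.image fun h => ({i | z i = h} : Finset (Fin n)),
          f #c ^ #{h | ({i | z i = h} : Finset (Fin n)) = c} := prod_comp (fun c => f #c) _
    _ = ∏ c ∈ partOf z, f #c ^ #{h | ({i | z i = h} : Finset (Fin n)) = c} :=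
      (prod_erase _ (by simp [hf])).symm
    _ = ∏ c ∈ partOf z, f #c :=
      prod_congr rfl fun c hc => by rw [card_fiber_preimage c hc, pow_one]

lemma partOf_eq_parts_iff {z : Fin n → Fin k} :
    partOf z = P.parts ↔ ∀ i, ({j | z j = z i} : Finset (Fin n)) = P.part i := by
  rw [partOf_eq_image_fiber, P.parts_eq_image_part]
  refine ⟨fun h i => ?_, fun h => by simp only [h]⟩
  have hmem : ({j | z j = z i} : Finset (Fin n)) ∈ P.parts := by
    rw [P.parts_eq_image_part, ← h]
    exact mem_image_of_mem _ (mem_univ i)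
  exact (P.part_eq_of_mem hmem (by simp)).symm

lemma partOf_eq_parts_iff_exists_labelOfParts {z : Fin n → Fin k} :
    partOf z = P.parts ↔ ∃ g : P.parts ↪ Fin k, P.labelOfParts g = z := by
  rw [partOf_eq_parts_iff]
  constructor
  · intro hz
    have label_eq_iff : ∀ i j, z i = z j ↔ P.part i = P.part j := fun i j => by
      rw [← hz i, ← hz j]
      refine ⟨fun h => by rw [h], fun h => ?_⟩
      have : i ∈ ({l | z l = z j} : Finset (Fin n)) := h ▸ by simp
      simpa using this
    choose rep hrep using fun c : P.parts => P.nonempty_of_mem_parts c.2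
    have part_rep : ∀ c, P.part (rep c) = c := fun c => P.part_eq_of_mem c.2 (hrep c)
    refine ⟨⟨fun c => z (rep c), fun c c' h => Subtype.ext ?_⟩, funext fun i => ?_⟩
    · rw [← part_rep c, ← part_rep c', ← label_eq_iff]
      exact h
    · exact (label_eq_iff _ _).2 (part_rep _)
  · rintro ⟨g, rfl⟩ i
    ext j
    simp [Finpartition.labelOfParts, P.mem_part_iff_part_eq_part]

lemma card_filter_partOf_eq_parts :
    #{z : Fin n → Fin k | partOf z = P.parts} = k.descFactorial #P.parts := by
  have : ({z : Fin n → Fin k | partOf z = P.parts} : Finset _) =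
      univ.image fun g : P.parts ↪ Fin k => P.labelOfParts g := by
    ext z
    simp [partOf_eq_parts_iff_exists_labelOfParts]
  rw [this, card_image_of_injective _ (f := fun g : P.parts ↪ Fin k => P.labelOfParts g)
    (P.labelOfParts_injective.comp DFunLike.coe_injective),
    card_univ, Fintype.card_embedding_eq, Fintype.card_fin, Fintype.card_coe]

end partOf

/-- The `k`-th summand is `p_K(k)` times the probability of the labelings inducing `C` given
`K = k`, with `π` already integrated out by the Dirichlet–multinomial identity. -/
theorem MFM_partition_distribution_general
    (γ : ℝ) (n : ℕ)
    (pK : ℕ → ℝ)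
    (C : Finset (Finset (Fin n)))
    (hne : ∀ c ∈ C, c.Nonempty)
    (hdisj : ∀ c ∈ C, ∀ c' ∈ C, c ≠ c' → Disjoint c c')
    (hcov : ∀ i : Fin n, ∃ c ∈ C, i ∈ c) :
    (∑' k : ℕ, pK k *
        ∑ z ∈ Finset.univ.filter (fun z : Fin n → Fin k => partOf z = C),
          (∏ h : Fin k, ascFac γ (Finset.univ.filter (fun i => z i = h)).card) /
            ascFac (γ * k) n)
      = (∑' k : ℕ, descFac k C.card / ascFac (γ * k) n * pK k) *
          ∏ c ∈ C, ascFac γ c.card := by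
  let P : Finpartition (univ : Finset (Fin n)) :=
    .ofExistsUnique C (fun _ _ => subset_univ _)
      (fun i _ => existsUnique_of_exists_of_unique (hcov i) fun c c' ⟨hc, hic⟩ ⟨hc', hic'⟩ =>
        by_contra fun h => disjoint_left.1 (hdisj c hc c' hc' h) hic hic')
      (fun h => (hne ∅ h).ne_empty rfl)
  rw [← tsum_mul_right]
  refine tsum_congr fun k => ?_
  have hcard : #{z : Fin n → Fin k | partOf z = C} = k.descFactorial #C :=
    card_filter_partOf_eq_parts P
  rw [sum_congr rfl fun z hz => by
      rw [prod_fiber_card_eq_prod_partOf _ (ascFac_zero γ) z, (mem_filter.1 hz).2],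
    sum_const, hcard, nsmul_eq_mul, descFac_eq_descFactorial]
  ring

/-- MFM partition distribution: under `K ~ p_K`, `(π₁,...,π_K) | K ~ Dirichlet(γ,...,γ)`,
and `z_i | K, π` i.i.d. categorical (so that, after integrating out `π`, a labeling
`z : Fin n → Fin k` has probability `∏_h γ^{(n_h)} / (γ k)^{(n)}` by the
Dirichlet–multinomial identity), the induced probability of the partition `C` of
`{1,...,n}` is `p(C) = V_n(t) ∏_{c ∈ C} γ^{(|c|)}`, where `t = |C|` and
`V_n(t) = Σ_k k_{(t)} / (γ k)^{(n)} p_K(k)`. -/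
theorem MFM_partition_distribution
    (γ : ℝ) (hγ : 0 < γ) (n : ℕ) (hn : 1 ≤ n)
    (pK : ℕ → ℝ) (hpK_nonneg : ∀ k, 0 ≤ pK k) (hpK_zero : pK 0 = 0)
    (hpK_sum : HasSum pK 1)
    (C : Finset (Finset (Fin n)))
    (hne : ∀ c ∈ C, c.Nonempty)
    (hdisj : ∀ c ∈ C, ∀ c' ∈ C, c ≠ c' → Disjoint c c')
    (hcov : ∀ i : Fin n, ∃ c ∈ C, i ∈ c) :
    (∑' k : ℕ, pK k *
        ∑ z ∈ Finset.univ.filter (fun z : Fin n → Fin k => partOf z = C),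
          (∏ h : Fin k, ascFac γ (Finset.univ.filter (fun i => z i = h)).card) /
            ascFac (γ * k) n)
      = (∑' k : ℕ, descFac k C.card / ascFac (γ * k) n * pK k) *
          ∏ c ∈ C, ascFac γ c.card :=
  MFM_partition_distribution_general γ n pK C hne hdisj hcov
end
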